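/- arXiv:1703.03461 — 4 statements merged into one kernel-verified Lean document; each statement's English description precedes it below -/
import Mathlib

section
/- For any n-dimensional weight r and any x ∈ ℝ^n and any real N > 1, there exists an integer vector (p_1,...,p_n,q) ∈ ℤ^{n+1} with 0 < |q| ≤ N and |q·x_i + p_i| ≤ N^{-r_i} for all i = 1,...,n. -/
/-!
Apply Minkowski's convex body theorem for `ℤ^{n+1}` to the preimage of the box
`[-N, N] × ∏ᵢ [-N^{-rᵢ}, N^{-rᵢ}]` under the shear `(q, p) ↦ (q, p + q x)`. The shear has
determinant one, so this symmetric convex body has volume `2^{n+1} N ∏ᵢ N^{-rᵢ} = 2^{n+1}`.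
A nonzero integer point with `q = 0` would have `|pᵢ| ≤ N^{-rᵢ} < 1` for all `i`, hence be zero;
this needs `rᵢ > 0`, and coordinates of weight zero are dealt with by rounding `q xᵢ` instead.
-/

open MeasureTheory Set

section Shear

variable {ι : Type*} (x : ι → ℝ)

def shear : (Option ι → ℝ) ≃ₗ[ℝ] (Option ι → ℝ) where
  toFun v j := j.elim (v none) fun i => v (some i) + x i * v none
  invFun v j := j.elim (v none) fun i => v (some i) - x i * v none
  map_add' u v := by funext j; cases j <;> simp; ring
  map_smul' c v := by funext j; cases j <;> simp; ring
  left_inv v := by funext j; cases j <;> simp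
  right_inv v := by funext j; cases j <;> simp

@[simp] lemma shear_apply_none (v : Option ι → ℝ) : shear x v none = v none := rfl

@[simp] lemma shear_apply_some (v : Option ι → ℝ) (i : ι) :
    shear x v (some i) = v (some i) + x i * v none := rfl

variable [Fintype ι] [DecidableEq ι]

lemma toMatrix'_shear :
    LinearMap.toMatrix' (shear x : (Option ι → ℝ) →ₗ[ℝ] (Option ι → ℝ)) =
      1 + Matrix.vecMulVec (fun j => j.elim 0 x) (Pi.single none 1) := by
  ext j k
  cases j <;> cases k <;> simp [Matrix.vecMulVec_apply, Matrix.one_apply, Pi.single_apply]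

lemma det_shear : LinearMap.det (shear x : (Option ι → ℝ) →ₗ[ℝ] (Option ι → ℝ)) = 1 := by
  rw [← LinearMap.det_toMatrix', toMatrix'_shear, Matrix.vecMulVec_eq Unit,
    Matrix.det_one_add_replicateCol_mul_replicateRow]
  simp [dotProduct, Fintype.sum_option]

end Shear

theorem exists_ne_zero_int_mem_of_two_pow_card_le_volume {ι : Type*} [Fintype ι] [Nonempty ι]
    {s : Set (ι → ℝ)} (h_symm : ∀ v ∈ s, -v ∈ s) (h_conv : Convex ℝ s) (h_cpt : IsCompact s)
    (h : 2 ^ Fintype.card ι ≤ volume s) :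
    ∃ w : ι → ℤ, w ≠ 0 ∧ (fun i => (w i : ℝ)) ∈ s := by
  set b := Pi.basisFun ℝ ι
  have h_fund : volume (ZSpan.fundamentalDomain b) = 1 := by
    simp [b, ZSpan.fundamentalDomain_pi_basisFun, volume_pi_pi]
  have : Countable (Submodule.span ℤ (range b)).toAddSubgroup :=
    inferInstanceAs (Countable (Submodule.span ℤ (range b)))
  obtain ⟨⟨u, hu⟩, hu0, hus⟩ := exists_ne_zero_mem_lattice_of_measure_mul_two_pow_le_measure
    (ZSpan.isAddFundamentalDomain' b volume) h_symm h_conv h_cpt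
    (by rwa [h_fund, one_mul, Module.finrank_fintype_fun_eq_card])
  choose w hw using (b.mem_span_iff_repr_mem ℤ u).mp hu
  have hu_eq : (fun i => (w i : ℝ)) = u := funext fun i => by simpa [b] using hw i
  refine ⟨w, ?_, hu_eq ▸ hus⟩
  rintro rfl
  exact hu0 (Subtype.ext (by simpa [Pi.zero_def] using hu_eq.symm))

theorem exists_int_shear_mem_Icc {ι : Type*} [Fintype ι] (x : ι → ℝ) {a : Option ι → ℝ}
    (ha : ∀ j, 0 ≤ a j) (h_prod : 1 ≤ ∏ j, a j) :
    ∃ w : Option ι → ℤ, w ≠ 0 ∧ shear x (fun j => (w j : ℝ)) ∈ Icc (-a) a := by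
  classical
  have h_symm : ∀ v ∈ shear x ⁻¹' Icc (-a) a, -v ∈ shear x ⁻¹' Icc (-a) a := by
    intro v ⟨hva, hvb⟩
    simp only [mem_preimage, map_neg, mem_Icc]
    exact ⟨neg_le_neg hvb, neg_le.mp hva⟩
  have h_vol : volume (shear x ⁻¹' Icc (-a) a) = ∏ j, ENNReal.ofReal (2 * a j) := by
    rw [Measure.addHaar_preimage_linearEquiv, LinearEquiv.det_coe_symm, det_shear,
      Real.volume_Icc_pi]
    simp [two_mul]
  refine exists_ne_zero_int_mem_of_two_pow_card_le_volume h_symm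
    ((convex_Icc _ _).linear_preimage (shear x).toLinearMap)
    ((shear x).toContinuousLinearEquiv.toHomeomorph.isCompact_preimage.2 isCompact_Icc) ?_
  calc (2 : ENNReal) ^ Fintype.card (Option ι)
      = ENNReal.ofReal (∏ _j : Option ι, 2) := by simp
    _ ≤ ENNReal.ofReal (∏ j, 2 * a j) := by
      rw [Finset.prod_mul_distrib]
      gcongr
      exact le_mul_of_one_le_right (by positivity) h_prod
    _ = volume (shear x ⁻¹' Icc (-a) a) := by
      rw [h_vol, ENNReal.ofReal_prod_of_nonneg fun j _ => by linarith [ha j]]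

theorem exists_weighted_dirichlet_of_pos {ι : Type*} [Fintype ι] {r : ι → ℝ} (hr : ∀ i, 0 < r i)
    (hsum : ∑ i, r i = 1) (x : ι → ℝ) {N : ℝ} (hN : 1 < N) :
    ∃ (p : ι → ℤ) (q : ℤ), q ≠ 0 ∧ (|q| : ℝ) ≤ N ∧
      ∀ i, |(q : ℝ) * x i + (p i : ℝ)| ≤ N ^ (-(r i)) := by
  have hN0 : 0 < N := one_pos.trans hN
  have h_prod : N * ∏ i, N ^ (-(r i)) = 1 := by
    rw [← Real.rpow_sum_of_pos hN0, Finset.sum_neg_distrib, hsum, Real.rpow_neg_one,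
      mul_inv_cancel₀ hN0.ne']
  obtain ⟨w, hw0, hw⟩ := exists_int_shear_mem_Icc x (a := fun j => j.elim N fun i => N ^ (-(r i)))
    (fun j => j.rec hN0.le fun i => (Real.rpow_pos_of_pos hN0 _).le)
    (by rw [Fintype.prod_option]; exact h_prod.ge)
  have hq : |(w none : ℝ)| ≤ N := abs_le.2 ⟨hw.1 none, hw.2 none⟩
  have hp (i : ι) : |(w (some i) : ℝ) + x i * w none| ≤ N ^ (-(r i)) :=
    abs_le.2 ⟨hw.1 (some i), hw.2 (some i)⟩
  refine ⟨w ∘ some, w none, fun hq0 => hw0 ?_, hq, fun i => ?_⟩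
  · funext j
    cases j with
    | none => exact hq0
    | some i =>
      have h_lt : |(w (some i) : ℝ)| < 1 := by
        calc |(w (some i) : ℝ)| ≤ N ^ (-(r i)) := by simpa [hq0] using hp i
          _ < 1 := Real.rpow_lt_one_of_one_lt_of_neg hN (neg_lt_zero.2 (hr i))
      exact Int.abs_lt_one_iff.mp (by exact_mod_cast h_lt)
  · simpa [mul_comm, add_comm] using hp i

theorem exists_weighted_dirichlet {ι : Type*} [Fintype ι] {r : ι → ℝ} (hr : ∀ i, 0 ≤ r i)
    (hsum : ∑ i, r i = 1) (x : ι → ℝ) {N : ℝ} (hN : 1 < N) :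
    ∃ (p : ι → ℤ) (q : ℤ), q ≠ 0 ∧ (|q| : ℝ) ≤ N ∧
      ∀ i, |(q : ℝ) * x i + (p i : ℝ)| ≤ N ^ (-(r i)) := by
  have hsum_pos : ∑ i : {i // 0 < r i}, r i = 1 := by
    rw [← hsum, ← Fintype.sum_subtype_add_sum_subtype (fun i => 0 < r i) r, left_eq_add]
    exact Finset.sum_eq_zero fun i _ => le_antisymm (not_lt.1 i.2) (hr i)
  obtain ⟨p, q, hq0, hqN, hp⟩ :=
    exists_weighted_dirichlet_of_pos (fun i => i.2) hsum_pos (fun i => x i) hN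
  refine ⟨fun i => if h : 0 < r i then p ⟨i, h⟩ else -round ((q : ℝ) * x i), q, hq0, hqN,
    fun i => ?_⟩
  by_cases h : 0 < r i
  · simpa [h] using hp ⟨i, h⟩
  · rw [le_antisymm (not_lt.1 h) (hr i), neg_zero, Real.rpow_zero]
    simpa [h, ← sub_eq_add_neg] using (abs_sub_round ((q : ℝ) * x i)).trans (by norm_num)

theorem stmt_1_general (n : ℕ) (r : Fin n → ℝ)
    (hr : ∀ i, 0 ≤ r i) (hsum : ∑ i, r i = 1) (x : Fin n → ℝ)
    (N : ℝ) (hN : 1 < N) :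
    ∃ (p : Fin n → ℤ) (q : ℤ), q ≠ 0 ∧ (|q| : ℝ) ≤ N ∧
      ∀ i, |(q : ℝ) * x i + (p i : ℝ)| ≤ N ^ (-(r i)) :=
  exists_weighted_dirichlet hr hsum x hN

/-- Weighted Dirichlet theorem: for any `n`-dimensional weight `r`, `x ∈ ℝⁿ`, and `N > 1`,
there is an integer vector `(p₁,...,pₙ,q)` with `0 < |q| ≤ N` and
`|q * x i + p i| ≤ N^{-r i}` for all `i`. -/
theorem stmt_1 (n : ℕ) (hn : 1 ≤ n) (r : Fin n → ℝ)
    (hr : ∀ i, 0 ≤ r i) (hsum : ∑ i, r i = 1) (x : Fin n → ℝ)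
    (N : ℝ) (hN : 1 < N) :
    ∃ (p : Fin n → ℤ) (q : ℤ), q ≠ 0 ∧ (|q| : ℝ) ≤ N ∧
      ∀ i, |(q : ℝ) * x i + (p i : ℝ)| ≤ N ^ (-(r i)) :=
  stmt_1_general n r hr hsum x N hN
end

section
/- Let r be an n-dimensional weight and x ∈ ℝ^n. Then x is r-badly approximable (i.e., there exists c > 0 such that max_i |q|^{r_i}|q x_i + p_i| ≥ c for all integer vectors (p_1,...,p_n,q) with q ≠ 0) if and only if the forward orbit {a_r(t) V(x) ℤ^{n+1} : t > 0} is bounded in the space of unimodular lattices, where a_r(t) = diag(e^{r_1 t},...,e^{r_n t}, e^{-t}) and V(x) is the upper unipotent matrix with identity (n×n) block, x in the last column, and 1 in the bottom-right entry. Here a subset of the space of lattices is bounded if and only if there is ε > 0 such that every lattice in the set contains no nonzero vector of sup-norm less than ε. -/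
/-!
The coordinates of `a_r(t) V(x) (p, q)` are `e^{r_i t} (q x_i + p_i)` and `e^{-t} q`. If the
last one is small then `|q| < e^t`, hence `|q|^{r_i} ≤ e^{r_i t}`, and bad approximability
bounds one of the others from below. Conversely, given `(p, q)`, look at the time `t` at which
`e^{-t} |q| = ε/2`: some other coordinate is then at least `ε`, which unwinds to
`|q|^{r_i} |q x_i + p_i| ≥ ε (ε/2)^{r_i} ≥ ε (ε/2)^{∑ r_j}` once `ε ≤ 1`.
-/

/-- The diagonal flow `a_r(t) = diag(e^{r₁ t}, ..., e^{rₙ t}, e^{-t})`. -/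
noncomputable def arMat (n : ℕ) (r : Fin n → ℝ) (t : ℝ) :
    Matrix (Fin (n + 1)) (Fin (n + 1)) ℝ :=
  Matrix.diagonal fun i =>
    if h : (i : ℕ) < n then Real.exp (r ⟨i, h⟩ * t) else Real.exp (-t)

/-- The unipotent matrix `V(x) = [[Iₙ, x], [0, 1]]`. -/
def VMat (n : ℕ) (x : Fin n → ℝ) : Matrix (Fin (n + 1)) (Fin (n + 1)) ℝ :=
  Matrix.of fun i j =>
    if i = j then 1
    else if h : (i : ℕ) < n ∧ (j : ℕ) = n then x ⟨i, h.1⟩ else 0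

open Matrix Real

section

variable {n : ℕ}

def IsBadlyApproximable (r x : Fin n → ℝ) : Prop :=
  ∃ c > (0 : ℝ), ∀ (p : Fin n → ℤ) (q : ℤ), q ≠ 0 →
    ∃ i, c ≤ |(q : ℝ)| ^ (r i) * |(q : ℝ) * x i + (p i : ℝ)|

def IsBoundedForwardOrbit (r x : Fin n → ℝ) : Prop :=
  ∃ ε > (0 : ℝ), ∀ t > (0 : ℝ), ∀ v : Fin (n + 1) → ℤ, v ≠ 0 →
    ε ≤ ‖(arMat n r t * VMat n x).mulVec fun i => (v i : ℝ)‖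

theorem VMat_mulVec_castSucc (x : Fin n → ℝ) (u : Fin (n + 1) → ℝ) (i : Fin n) :
    (VMat n x *ᵥ u) i.castSucc = u i.castSucc + x i * u (Fin.last n) := by
  have hval (j : Fin n) : (j : ℕ) ≠ n := j.isLt.ne
  simp [mulVec, dotProduct, Fin.sum_univ_castSucc, VMat, hval]

theorem VMat_mulVec_last (x : Fin n → ℝ) (u : Fin (n + 1) → ℝ) :
    (VMat n x *ᵥ u) (Fin.last n) = u (Fin.last n) := by
  simp [mulVec, dotProduct, VMat]

theorem arMat_mul_VMat_mulVec_castSucc (r : Fin n → ℝ) (t : ℝ) (x : Fin n → ℝ)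
    (u : Fin (n + 1) → ℝ) (i : Fin n) :
    ((arMat n r t * VMat n x) *ᵥ u) i.castSucc =
      exp (r i * t) * (u (Fin.last n) * x i + u i.castSucc) := by
  simp only [← mulVec_mulVec, arMat, mulVec_diagonal, VMat_mulVec_castSucc]
  simp only [Fin.val_castSucc, i.isLt, dif_pos, Fin.eta]
  ring

theorem arMat_mul_VMat_mulVec_last (r : Fin n → ℝ) (t : ℝ) (x : Fin n → ℝ)
    (u : Fin (n + 1) → ℝ) :
    ((arMat n r t * VMat n x) *ᵥ u) (Fin.last n) = exp (-t) * u (Fin.last n) := by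
  simp [← mulVec_mulVec, arMat, mulVec_diagonal, VMat_mulVec_last]

theorem le_norm_arMat_mul_VMat_mulVec_iff {ε : ℝ} (hε : 0 < ε) (r : Fin n → ℝ) (t : ℝ)
    (x : Fin n → ℝ) (u : Fin (n + 1) → ℝ) :
    ε ≤ ‖(arMat n r t * VMat n x) *ᵥ u‖ ↔
      (∃ i, ε ≤ exp (r i * t) * |u (Fin.last n) * x i + u i.castSucc|) ∨
        ε ≤ exp (-t) * |u (Fin.last n)| := by
  rw [← not_lt, pi_norm_lt_iff hε, Fin.forall_fin_succ']
  simp only [arMat_mul_VMat_mulVec_castSucc, arMat_mul_VMat_mulVec_last, Real.norm_eq_abs,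
    abs_mul, abs_exp, not_and_or, not_forall, not_lt]

theorem one_le_abs_intCast {q : ℤ} (hq : q ≠ 0) : 1 ≤ |(q : ℝ)| := by
  exact_mod_cast Int.one_le_abs hq

theorem IsBadlyApproximable.isBoundedForwardOrbit {r x : Fin n → ℝ} (hr : ∀ i, 0 ≤ r i)
    (h : IsBadlyApproximable r x) : IsBoundedForwardOrbit r x := by
  obtain ⟨c, hc, hbad⟩ := h
  have hε : 0 < min c 1 := lt_min hc one_pos
  refine ⟨min c 1, hε, fun t ht v hv => ?_⟩
  rw [le_norm_arMat_mul_VMat_mulVec_iff hε]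
  by_cases hq : v (Fin.last n) = 0
  · obtain ⟨j, hj⟩ := Function.ne_iff.mp hv
    induction j using Fin.lastCases with
    | last => exact absurd hq hj
    | cast i =>
      refine Or.inl ⟨i, ?_⟩
      simp only [hq, Int.cast_zero, zero_mul, zero_add]
      calc min c 1 ≤ 1 := min_le_right _ _
        _ ≤ exp (r i * t) * |(v i.castSucc : ℝ)| :=
          one_le_mul_of_one_le_of_one_le (one_le_exp (mul_nonneg (hr i) ht.le))
            (one_le_abs_intCast hj)
  rcases le_or_gt (min c 1) (exp (-t) * |(v (Fin.last n) : ℝ)|) with hlast | hsmall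
  · exact Or.inr hlast
  have hq_le : |(v (Fin.last n) : ℝ)| ≤ exp t := by
    rw [exp_neg, inv_mul_eq_div, div_lt_iff₀ (exp_pos t)] at hsmall
    exact hsmall.le.trans (mul_le_of_le_one_left (exp_pos t).le (min_le_right c 1))
  obtain ⟨i, hi⟩ := hbad (fun i => v i.castSucc) (v (Fin.last n)) hq
  refine Or.inl ⟨i, (min_le_left c 1).trans <|
    hi.trans (mul_le_mul_of_nonneg_right ?_ (abs_nonneg _))⟩
  calc |(v (Fin.last n) : ℝ)| ^ r i ≤ exp t ^ r i := rpow_le_rpow (abs_nonneg _) hq_le (hr i)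
    _ = exp (r i * t) := by rw [← exp_mul, mul_comm]

theorem IsBoundedForwardOrbit.isBadlyApproximable {r x : Fin n → ℝ} (hr : ∀ i, 0 ≤ r i)
    (h : IsBoundedForwardOrbit r x) : IsBadlyApproximable r x := by
  obtain ⟨ε, hε, hbounded⟩ := h
  obtain ⟨η, hη, hη1, hηε⟩ : ∃ η, 0 < η ∧ η ≤ 1 ∧ η ≤ ε :=
    ⟨min ε 1, lt_min hε one_pos, min_le_right ε 1, min_le_left ε 1⟩
  refine ⟨η * (η / 2) ^ ∑ j, r j, by positivity, fun p q hq => ?_⟩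
  have hq1 := one_le_abs_intCast hq
  set t := log (|(q : ℝ)| / (η / 2))
  have hexp_t : exp t = |(q : ℝ)| / (η / 2) := exp_log (by positivity)
  have hscale : |(q : ℝ)| * exp (-t) = η / 2 := by
    rw [exp_neg, hexp_t]
    field_simp
  have ht : 0 < t := log_pos ((one_lt_div (by positivity)).2 (by linarith))
  have hv : (Fin.snoc p q : Fin (n + 1) → ℤ) ≠ 0 := fun h =>
    hq (by simpa using congrFun h (Fin.last n))
  have hlarge := hηε.trans (hbounded t ht _ hv)
  rw [le_norm_arMat_mul_VMat_mulVec_iff hη] at hlarge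
  simp only [Fin.snoc_castSucc, Fin.snoc_last] at hlarge
  rcases hlarge with ⟨i, hi⟩ | hlast
  · refine ⟨i, ?_⟩
    have hrow : η * exp (-(r i * t)) ≤ |(q : ℝ) * x i + (p i : ℝ)| := by
      rw [exp_neg, ← div_eq_mul_inv, div_le_iff₀ (exp_pos _), mul_comm]
      exact hi
    calc η * (η / 2) ^ ∑ j, r j ≤ η * (η / 2) ^ r i := by
          refine mul_le_mul_of_nonneg_left ?_ hη.le
          exact rpow_le_rpow_of_exponent_ge (by positivity) (by linarith)
            (Finset.single_le_sum (fun j _ => hr j) (Finset.mem_univ i))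
      _ = |(q : ℝ)| ^ r i * (η * exp (-(r i * t))) := by
          rw [← hscale, mul_rpow (abs_nonneg _) (exp_pos _).le, ← exp_mul]
          ring_nf
      _ ≤ |(q : ℝ)| ^ r i * |(q : ℝ) * x i + (p i : ℝ)| := by gcongr
  · rw [mul_comm, hscale] at hlast
    linarith

end

theorem stmt_2_general (n : ℕ) (r : Fin n → ℝ)
    (hr : ∀ i, 0 ≤ r i) (x : Fin n → ℝ) :
    (∃ c > (0 : ℝ), ∀ (p : Fin n → ℤ) (q : ℤ), q ≠ 0 →
        ∃ i, c ≤ |(q : ℝ)| ^ (r i) * |(q : ℝ) * x i + (p i : ℝ)|) ↔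
    (∃ ε > (0 : ℝ), ∀ t > (0 : ℝ), ∀ v : Fin (n + 1) → ℤ, v ≠ 0 →
        ε ≤ ‖(arMat n r t * VMat n x).mulVec fun i => (v i : ℝ)‖) :=
  ⟨IsBadlyApproximable.isBoundedForwardOrbit hr, IsBoundedForwardOrbit.isBadlyApproximable hr⟩

/-- `x` is `r`-badly approximable iff the forward orbit `{a_r(t) V(x) ℤ^{n+1} : t > 0}` is
bounded in the space of unimodular lattices, i.e. there is `ε > 0` such that no lattice in
the orbit contains a nonzero vector of sup-norm less than `ε`. -/
theorem stmt_2 (n : ℕ) (hn : 1 ≤ n) (r : Fin n → ℝ)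
    (hr : ∀ i, 0 ≤ r i) (hsum : ∑ i, r i = 1) (x : Fin n → ℝ) :
    (∃ c > (0 : ℝ), ∀ (p : Fin n → ℤ) (q : ℤ), q ≠ 0 →
        ∃ i, c ≤ |(q : ℝ)| ^ (r i) * |(q : ℝ) * x i + (p i : ℝ)|) ↔
    (∃ ε > (0 : ℝ), ∀ t > (0 : ℝ), ∀ v : Fin (n + 1) → ℤ, v ≠ 0 →
        ε ≤ ‖(arMat n r t * VMat n x).mulVec fun i => (v i : ℝ)‖) :=
  stmt_2_general n r hr x
end

section
/- Let r = (r_1,...,r_n) be an n-dimensional weight and x ∈ ℝ^n. The following are equivalent: (1) there exists c > 0 such that for any integer vector (p_1,...,p_n,q) with q ≠ 0, max_{1≤i≤n} |q|^{r_i}|q x_i + p_i| ≥ c; (2) there exists c' > 0 such that for any real N ≥ 1, the only integer solution (a_0, a_1,...,a_n) to the system |a_0 + a_1 x_1 + ... + a_n x_n| < c' N^{-1} and |a_i| < N^{r_i} for all 1 ≤ i ≤ n is a_0 = a_1 = ... = a_n = 0. -/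
/-!
Failure of either condition means arbitrarily good approximations at some scale, in the
normalised forms `HasSimultaneousApprox r x ε` and `HasDualApprox r x η` for all `ε, η > 0`.
Both transference directions rest on the identity `q (a₀ + a·x) = ∑ aᵢ (q xᵢ + pᵢ)`, valid
whenever `q a₀ = ∑ aᵢ pᵢ`, together with a pigeonhole argument.

From `(q, p)` at scale `Q = |q| / ε`: the box `0 ≤ bᵢ < η Q^{rᵢ}` has about `ηⁿ Q > |q|`
points, so two of them agree in `b·p` modulo `q`, and their difference is a dual solution.

From `a` at scale `N`: first shrink the scale to `T` so that some `|aⱼ| = η T^{rⱼ}` is extremal.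
Then two of `u = 0, …, ⌊εT⌋` lie in the same cell for the fractional parts of `u xᵢ` (`i ≠ j`)
and for a residue modulo `aⱼ`. Their difference `q` approximates every `xᵢ` with `i ≠ j`, and
`pⱼ` can then be chosen with `q a₀ = ∑ aᵢ pᵢ`, so the identity also bounds the `j`-th coordinate.
-/

open Finset Filter

def IsBadSimultaneous {ι : Type*} (r x : ι → ℝ) : Prop :=
  ∃ c > (0 : ℝ), ∀ (p : ι → ℤ) (q : ℤ), q ≠ 0 →
    ∃ i, c ≤ |(q : ℝ)| ^ (r i) * |(q : ℝ) * x i + (p i : ℝ)|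

def HasSimultaneousApprox {ι : Type*} (r x : ι → ℝ) (ε : ℝ) : Prop :=
  ∃ Q ≥ (1 : ℝ), ∃ (q : ℤ) (p : ι → ℤ), q ≠ 0 ∧ |(q : ℝ)| ≤ ε * Q ∧
    ∀ i, |(q : ℝ) * x i + p i| ≤ ε / Q ^ r i

theorem HasSimultaneousApprox.mono {ι : Type*} {r x : ι → ℝ} {ε ε' : ℝ}
    (h : HasSimultaneousApprox r x ε) (hεε' : ε ≤ ε') : HasSimultaneousApprox r x ε' := by
  obtain ⟨Q, hQ, q, p, hq, hqQ, hp⟩ := h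
  have hQ0 : 0 < Q := one_pos.trans_le hQ
  exact ⟨Q, hQ, q, p, hq, hqQ.trans (by gcongr), fun i => (hp i).trans (by gcongr)⟩

theorem not_isBadSimultaneous_of_forall_hasSimultaneousApprox {ι : Type*} {r x : ι → ℝ}
    (hr : ∀ i, 0 ≤ r i) (h : ∀ ε > 0, HasSimultaneousApprox r x ε) :
    ¬IsBadSimultaneous r x := by
  rintro ⟨c, hc, hbad⟩
  obtain ⟨ε, hε, hεc⟩ := exists_between (lt_min hc one_pos)
  rw [lt_min_iff] at hεc
  obtain ⟨Q, hQ, q, p, hq, hqQ, hp⟩ := h ε hε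
  have hQ0 : 0 < Q := one_pos.trans_le hQ
  obtain ⟨i, hi⟩ := hbad p q hq
  have : |(q : ℝ)| ^ r i * |(q : ℝ) * x i + p i| ≤ ε ^ r i * ε := calc
    _ ≤ (ε * Q) ^ r i * (ε / Q ^ r i) :=
      mul_le_mul (Real.rpow_le_rpow (abs_nonneg _) hqQ (hr i)) (hp i) (abs_nonneg _)
        (by positivity)
    _ = ε ^ r i * ε := by rw [Real.mul_rpow hε.le hQ0.le]; field_simp
  have : ε ^ r i ≤ 1 := Real.rpow_le_one hε.le hεc.2.le (hr i)
  nlinarith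

theorem abs_mul_le_mul_of_le_mul_of_le_div {a b η ε t : ℝ} (ht : 0 < t) (ha : |a| ≤ η * t)
    (hb : |b| ≤ ε / t) : |a * b| ≤ η * ε :=
  calc |a * b| = |a| * |b| := abs_mul a b
    _ ≤ η * t * (ε / t) := mul_le_mul ha hb (abs_nonneg b) ((abs_nonneg a).trans ha)
    _ = η * ε := by field_simp

theorem pos_of_abs_lt_rpow {a : ℤ} {r N : ℝ} (hr : 0 ≤ r) (ha : a ≠ 0)
    (h : |(a : ℝ)| < N ^ r) : 0 < r := by
  refine hr.lt_of_ne fun h0 => ha (Int.abs_lt_one_iff.1 ?_)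
  rw [← h0, Real.rpow_zero] at h
  exact_mod_cast h

section

variable {ι : Type*} [Fintype ι] {r x : ι → ℝ}

def IsBadDual (r x : ι → ℝ) : Prop :=
  ∃ c' > (0 : ℝ), ∀ N : ℝ, 1 ≤ N → ∀ (a0 : ℤ) (a : ι → ℤ),
    (|(a0 : ℝ) + ∑ i, (a i : ℝ) * x i| < c' * N⁻¹ ∧ ∀ i, |(a i : ℝ)| < N ^ (r i)) →
    a0 = 0 ∧ a = 0

def HasDualApprox (r x : ι → ℝ) (η : ℝ) : Prop :=
  ∃ N ≥ (1 : ℝ), ∃ (a0 : ℤ) (a : ι → ℤ), a ≠ 0 ∧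
    |(a0 : ℝ) + ∑ i, (a i : ℝ) * x i| ≤ η / N ∧ ∀ i, |(a i : ℝ)| ≤ η * N ^ r i

theorem HasDualApprox.mono {η η' : ℝ} (h : HasDualApprox r x η) (hηη' : η ≤ η') :
    HasDualApprox r x η' := by
  obtain ⟨N, hN, a0, a, ha, hL, hab⟩ := h
  have hN0 : 0 < N := one_pos.trans_le hN
  exact ⟨N, hN, a0, a, ha, hL.trans (by gcongr), fun i => (hab i).trans (by gcongr)⟩

theorem hasSimultaneousApprox_of_not_isBadSimultaneous (hr : ∀ i, 0 ≤ r i)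
    (hsum : ∑ i, r i = 1) (h : ¬IsBadSimultaneous r x) {ε : ℝ} (hε : 0 < ε) :
    HasSimultaneousApprox r x ε := by
  unfold IsBadSimultaneous at h
  push Not at h
  set δ := min ε 1
  have hδ : 0 < δ := lt_min hε one_pos
  refine (?_ : HasSimultaneousApprox r x δ).mono (min_le_left _ _)
  obtain ⟨p, q, hq, hpq⟩ := h (δ ^ 2) (by positivity)
  have hq1 : (1 : ℝ) ≤ |(q : ℝ)| := by exact_mod_cast Int.one_le_abs hq
  set Q := |(q : ℝ)| / δ
  have hQ0 : 0 < Q := by positivity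
  have hqQ : |(q : ℝ)| = δ * Q := (mul_div_cancel₀ _ hδ.ne').symm
  refine ⟨Q, (one_le_div hδ).2 ((min_le_right _ _).trans hq1), q, p, hq, hqQ.le, fun i => ?_⟩
  have hri : r i ≤ 1 := hsum ▸ single_le_sum (fun j _ => hr j) (mem_univ i)
  have hδr : δ ≤ δ ^ r i := by
    simpa using Real.rpow_le_rpow_of_exponent_ge hδ (min_le_right _ _) hri
  have := hpq i
  rw [hqQ, Real.mul_rpow hδ.le hQ0.le] at this
  rw [le_div_iff₀ (by positivity)]
  refine le_of_mul_le_mul_left ?_ hδ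
  nlinarith [abs_nonneg ((q : ℝ) * x i + p i), Real.rpow_pos_of_pos hQ0 (r i)]

theorem not_isBadSimultaneous_iff (hr : ∀ i, 0 ≤ r i) (hsum : ∑ i, r i = 1) :
    ¬IsBadSimultaneous r x ↔ ∀ ε > 0, HasSimultaneousApprox r x ε :=
  ⟨fun h _ => hasSimultaneousApprox_of_not_isBadSimultaneous hr hsum h,
    not_isBadSimultaneous_of_forall_hasSimultaneousApprox hr⟩

theorem hasDualApprox_of_not_isBadDual (hr : ∀ i, 0 ≤ r i) (h : ¬IsBadDual r x) {η : ℝ}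
    (hη : 0 < η) : HasDualApprox r x η := by
  unfold IsBadDual at h
  push Not at h
  -- Scaling `N` up by `s` turns `|a i| < N ^ r i` into `|a i| ≤ η * (s * N) ^ r i`
  -- (coordinates with `r i = 0` vanish), at the price of `η / s` in the linear form.
  have hlarge : ∀ᶠ s in atTop, max 1 η ≤ s ∧ ∀ i, 0 < r i → η⁻¹ ≤ s ^ r i :=
    (eventually_ge_atTop _).and <| eventually_all.2 fun i => by
      by_cases hri : 0 < r i
      · filter_upwards [(tendsto_rpow_atTop hri).eventually_ge_atTop η⁻¹] with s hs _ using hs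
      · exact .of_forall fun _ h => absurd h hri
  obtain ⟨s, hs, hsr⟩ := hlarge.exists
  have hs1 : 1 ≤ s := (le_max_left _ _).trans hs
  have hs0 : 0 < s := one_pos.trans_le hs1
  obtain ⟨N, hN, a0, a, ⟨hL, hab⟩, hne⟩ := h (η / s) (by positivity)
  have hN0 : 0 < N := one_pos.trans_le hN
  have ha : a ≠ 0 := by
    intro ha0
    refine hne (Int.abs_lt_one_iff.1 ?_) ha0
    have hbound : η / s * N⁻¹ ≤ 1 :=
      mul_le_one₀ ((div_le_one hs0).2 ((le_max_right _ _).trans hs)) (by positivity)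
        (inv_le_one_of_one_le₀ hN)
    have := hL.trans_le hbound
    simp only [ha0, Pi.zero_apply, Int.cast_zero, zero_mul, sum_const_zero, add_zero] at this
    exact_mod_cast this
  refine ⟨s * N, one_le_mul_of_one_le_of_one_le hs1 hN, a0, a, ha, ?_, fun i => ?_⟩
  · exact hL.le.trans_eq (by field_simp)
  by_cases hai : a i = 0
  · simp only [hai, Int.cast_zero, abs_zero]; positivity
  calc |(a i : ℝ)| ≤ 1 * N ^ r i := by linarith [hab i]
    _ ≤ (η * s ^ r i) * N ^ r i := by
      gcongr
      rw [← inv_mul_le_iff₀ hη, mul_one]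
      exact hsr i (pos_of_abs_lt_rpow (hr i) hai (hab i))
    _ = η * (s * N) ^ r i := by rw [Real.mul_rpow hs0.le hN0.le]; ring

theorem not_isBadDual_of_forall_hasDualApprox (h : ∀ η > 0, HasDualApprox r x η) :
    ¬IsBadDual r x := by
  rintro ⟨c', hc', hbad⟩
  obtain ⟨η, hη, hηc⟩ := exists_between (lt_min hc' one_pos)
  rw [lt_min_iff] at hηc
  obtain ⟨N, hN, a0, a, ha, hL, hab⟩ := h η hη
  have hN0 : 0 < N := one_pos.trans_le hN
  refine ha (hbad N hN a0 a ⟨hL.trans_lt ?_, fun i => (hab i).trans_lt ?_⟩).2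
  · rw [← div_eq_mul_inv]; gcongr; exact hηc.1
  · exact mul_lt_of_lt_one_left (by positivity) hηc.2

theorem not_isBadDual_iff (hr : ∀ i, 0 ≤ r i) :
    ¬IsBadDual r x ↔ ∀ η > 0, HasDualApprox r x η :=
  ⟨fun h _ => hasDualApprox_of_not_isBadDual hr h, not_isBadDual_of_forall_hasDualApprox⟩

theorem prod_rpow_eq_self (hsum : ∑ i, r i = 1) {T : ℝ} (hT : 0 < T) : ∏ i, T ^ r i = T := by
  rw [← Real.rpow_sum_of_pos hT, hsum, Real.rpow_one]

theorem cast_mul_add_sum_eq {q a0 : ℤ} {a p : ι → ℤ} (h : q * a0 = ∑ i, a i * p i)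
    (x : ι → ℝ) : (q : ℝ) * (a0 + ∑ i, a i * x i) = ∑ i, (a i : ℝ) * (q * x i + p i) := by
  have hcast : (q : ℝ) * a0 = ∑ i, (a i : ℝ) * p i := by exact_mod_cast h
  rw [mul_add, hcast, mul_sum, ← sum_add_distrib]
  exact sum_congr rfl fun i _ => by ring

theorem abs_le_abs_add_sum_sdiff_abs [DecidableEq ι] {f : ι → ℝ} {c : ℝ} (h : ∑ i, f i = c)
    (j : ι) : |f j| ≤ |c| + ∑ i ∈ univ \ {j}, |f i| := by
  rw [← h, sum_eq_add_sum_sdiff_singleton_of_mem (mem_univ j)]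
  calc |f j| = |(f j + ∑ i ∈ univ \ {j}, f i) - ∑ i ∈ univ \ {j}, f i| := by
        rw [add_sub_cancel_right]
    _ ≤ _ := (abs_sub _ _).trans (add_le_add le_rfl (abs_sum_le_sum_abs _ _))

theorem exists_update_sum_mul_eq [DecidableEq ι] {a p : ι → ℤ} {c : ℤ} {j : ι}
    (h : a j ∣ c - ∑ i, a i * p i) : ∃ k, ∑ i, a i * Function.update p j k i = c := by
  obtain ⟨t, ht⟩ := h
  refine ⟨p j + t, ?_⟩
  have hupd : (fun i => a i * Function.update p j (p j + t) i) =
      Function.update (fun i => a i * p i) j (a j * (p j + t)) := by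
    ext i
    rcases eq_or_ne i j with rfl | hij <;> simp [*]
  rw [sum_eq_add_sum_sdiff_singleton_of_mem (mem_univ j)] at ht
  rw [hupd, sum_update_of_mem (mem_univ j)]
  linarith

theorem exists_ne_zero_abs_lt_dvd_sum_mul (p : ι → ℤ) {q : ℤ} (hq : q ≠ 0) (M : ι → ℕ)
    (hM : q.natAbs < ∏ i, M i) :
    ∃ b : ι → ℤ, b ≠ 0 ∧ (∀ i, |b i| < M i) ∧ q ∣ ∑ i, b i * p i := by
  classical
  have : NeZero q.natAbs := ⟨Int.natAbs_ne_zero.2 hq⟩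
  set box : Finset (ι → ℤ) := Icc 0 fun i => (M i : ℤ) - 1
  have hcard : (univ : Finset (ZMod q.natAbs)).card < box.card := by
    simpa [box, Pi.card_Icc, Int.card_Icc] using hM
  obtain ⟨v, hv, w, hw, hvw, hsum⟩ := exists_ne_map_eq_of_card_lt_of_maps_to hcard
    (f := fun v => ((∑ i, v i * p i : ℤ) : ZMod q.natAbs)) fun _ _ => mem_coe.2 (mem_univ _)
  simp only [box, mem_Icc, Pi.le_def] at hv hw
  refine ⟨w - v, sub_ne_zero.2 hvw.symm, fun i => ?_, ?_⟩
  · have := hv.1 i; have := hv.2 i; have := hw.1 i; have := hw.2 i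
    simp only [Pi.sub_apply, Pi.zero_apply] at *
    rw [abs_lt]; constructor <;> omega
  · rw [← Int.natAbs_dvd]
    simpa [sub_mul, sum_sub_distrib] using (ZMod.intCast_eq_intCast_iff_dvd_sub _ _ _).1 hsum

theorem exists_abs_mul_add_lt_and_dvd (x : ι → ℝ) {B : ι → ℕ} (hB : ∀ i, 0 < B i) (c0 : ℤ)
    (c : ι → ℤ) (m : ℕ) [NeZero m] {K : ℕ} (hK : (∏ i, B i) * m ≤ K) :
    ∃ q : ℤ, q ≠ 0 ∧ |q| ≤ K ∧ ∃ p : ι → ℤ,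
      (∀ i, |q * x i + p i| < 1 / B i) ∧ (m : ℤ) ∣ q * c0 - ∑ i, c i * p i := by
  classical
  set cell : ℕ → (ι → ℤ) × ZMod m := fun u =>
    (fun i => ⌊Int.fract (u * x i) * B i⌋, ((u * c0 + ∑ i, c i * ⌊u * x i⌋ : ℤ) : ZMod m))
  set cells := (Icc 0 fun i => (B i : ℤ) - 1) ×ˢ (univ : Finset (ZMod m))
  have hmaps : Set.MapsTo cell (range (K + 1)) cells := by
    intro u _
    simp only [cell, cells, mem_coe, mem_product, mem_Icc, Pi.le_def, mem_univ, and_true]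
    refine ⟨fun i => Int.floor_nonneg.2 (by positivity), fun i => ?_⟩
    have : Int.fract (u * x i) * B i < ((B i : ℤ) : ℝ) := by
      exact_mod_cast mul_lt_of_lt_one_left (by exact_mod_cast hB i) (Int.fract_lt_one _)
    have := Int.floor_lt.2 this
    omega
  have hcard : cells.card < (range (K + 1)).card := by
    simpa [cells, card_product, Pi.card_Icc, Int.card_Icc] using Nat.lt_succ_of_le hK
  obtain ⟨u, hu, v, hv, huv, hcell⟩ := exists_ne_map_eq_of_card_lt_of_maps_to hcard hmaps
  rw [mem_range, Nat.lt_succ_iff] at hu hv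
  obtain ⟨hfloor, hres⟩ := Prod.ext_iff.1 hcell
  refine ⟨u - v, by omega, by rw [abs_le]; omega, fun i => ⌊v * x i⌋ - ⌊u * x i⌋,
    fun i => ?_, ?_⟩
  · have hB0 : (0 : ℝ) < B i := by exact_mod_cast hB i
    have := Int.abs_sub_lt_one_of_floor_eq_floor (congrFun hfloor i)
    rw [← sub_mul, abs_mul, abs_of_pos hB0, ← lt_div_iff₀ hB0] at this
    have hfract : ((u - v : ℤ) : ℝ) * x i + ((⌊v * x i⌋ - ⌊u * x i⌋ : ℤ) : ℝ) =
        Int.fract (u * x i) - Int.fract (v * x i) := by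
      push_cast; unfold Int.fract; ring
    rwa [hfract]
  · convert (ZMod.intCast_eq_intCast_iff_dvd_sub _ _ _).1 hres.symm using 1
    simp only [mul_sub, sum_sub_distrib]
    ring

theorem HasSimultaneousApprox.hasDualApprox (hr : ∀ i, 0 ≤ r i) (hsum : ∑ i, r i = 1)
    {ε η : ℝ} (hε : 0 < ε) (hε1 : ε ≤ 1) (hη : 0 < η) (hεη : 2 * ε ≤ η ^ Fintype.card ι)
    (h : HasSimultaneousApprox r x ε) : HasDualApprox r x ((Fintype.card ι + 1) * η) := by
  obtain ⟨Q, hQ, q, p, hq, hqQ, hp⟩ := h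
  have hq1 : (1 : ℝ) ≤ |(q : ℝ)| := by exact_mod_cast Int.one_le_abs hq
  set T := |(q : ℝ)| / ε
  have hT1 : 1 ≤ T := (one_le_div hε).2 (hε1.trans hq1)
  have hT0 : 0 < T := one_pos.trans_le hT1
  have hqT : |(q : ℝ)| = ε * T := (mul_div_cancel₀ _ hε.ne').symm
  have hpT : ∀ i, |(q : ℝ) * x i + p i| ≤ ε / T ^ r i := fun i => (hp i).trans <| by
    gcongr
    exacts [hr i, (div_le_iff₀ hε).2 (by linarith)]
  set M : ι → ℕ := fun i => ⌈η * T ^ r i⌉₊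
  have hM : |(q : ℝ)| < ∏ i, (M i : ℝ) := calc
    |(q : ℝ)| < 2 * ε * T := by rw [hqT]; nlinarith
    _ ≤ η ^ Fintype.card ι * T := by gcongr
    _ = ∏ i, η * T ^ r i := by
      rw [prod_mul_distrib, prod_const, prod_rpow_eq_self hsum hT0, card_univ]
    _ ≤ ∏ i, (M i : ℝ) := prod_le_prod (fun i _ => by positivity) fun i _ => Nat.le_ceil _
  obtain ⟨b, hb, hbM, b0, hb0⟩ := exists_ne_zero_abs_lt_dvd_sum_mul p hq M <| by
    rw [← Nat.cast_lt (α := ℝ)]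
    push_cast [Nat.cast_natAbs, Int.cast_abs]
    exact hM
  have hbT : ∀ i, |(b i : ℝ)| ≤ η * T ^ r i := fun i => by
    have h1 : |(b i : ℝ)| + 1 ≤ M i := by exact_mod_cast Int.add_one_le_of_lt (hbM i)
    linarith [Nat.ceil_lt_add_one (R := ℝ) (by positivity : 0 ≤ η * T ^ r i)]
  have hL : ε * T * |b0 + ∑ i, (b i : ℝ) * x i| ≤ Fintype.card ι * (η * ε) := by
    rw [← hqT, ← abs_mul, cast_mul_add_sum_eq hb0.symm]
    calc |∑ i, (b i : ℝ) * (q * x i + p i)| ≤ ∑ i, |(b i : ℝ) * (q * x i + p i)| :=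
          abs_sum_le_sum_abs _ _
      _ ≤ ∑ _i, η * ε := sum_le_sum fun i _ =>
          abs_mul_le_mul_of_le_mul_of_le_div (by positivity) (hbT i) (hpT i)
      _ = Fintype.card ι * (η * ε) := by simp
  refine ⟨T, hT1, b0, b, hb, ?_, fun i => (hbT i).trans ?_⟩
  · rw [le_div_iff₀ hT0]
    refine le_of_mul_le_mul_left ?_ hε
    nlinarith
  · rw [mul_assoc]
    exact le_mul_of_one_le_left (by positivity) (by simp)

theorem exists_tight_scale (hr : ∀ i, 0 ≤ r i) {η N : ℝ} (hη : 0 < η) (hη1 : η < 1)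
    (hN : 0 < N) {a : ι → ℤ} (ha : a ≠ 0) (hab : ∀ i, |(a i : ℝ)| ≤ η * N ^ r i) :
    ∃ T, 1 ≤ T ∧ T ≤ N ∧ ∃ j, |(a j : ℝ)| = η * T ^ r j ∧
      ∀ i, |(a i : ℝ)| ≤ η * T ^ r i := by
  classical
  have hrpos : ∀ {i}, a i ≠ 0 → 0 < r i := fun {i} hai => pos_of_abs_lt_rpow (hr i) hai <|
    (hab i).trans_lt (mul_lt_of_lt_one_left (by positivity) hη1)
  set scale : ι → ℝ := fun i => (|(a i : ℝ)| / η) ^ (r i)⁻¹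
  have hscale : ∀ i, a i ≠ 0 → scale i ^ r i = |(a i : ℝ)| / η := fun i hai =>
    Real.rpow_inv_rpow (by positivity) (hrpos hai).ne'
  have hsupp : (univ.filter fun i => a i ≠ 0).Nonempty := by
    obtain ⟨i, hi⟩ := Function.ne_iff.1 ha
    exact ⟨i, mem_filter.2 ⟨mem_univ i, hi⟩⟩
  obtain ⟨j, hj, hmax⟩ := exists_max_image _ scale hsupp
  have haj : a j ≠ 0 := (mem_filter.1 hj).2
  have hη_le : η ≤ |(a j : ℝ)| := hη1.le.trans (by exact_mod_cast Int.one_le_abs haj)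
  refine ⟨scale j, Real.one_le_rpow ((one_le_div hη).2 hη_le) (inv_nonneg.2 (hr j)), ?_, j, ?_,
    fun i => ?_⟩
  · rw [← Real.rpow_le_rpow_iff (by positivity) hN.le (hrpos haj), hscale j haj,
      div_le_iff₀' hη]
    exact hab j
  · rw [hscale j haj]; field_simp
  · by_cases hai : a i = 0
    · simp only [hai, Int.cast_zero, abs_zero]; positivity
    calc |(a i : ℝ)| = η * scale i ^ r i := by rw [hscale i hai]; field_simp
      _ ≤ η * scale j ^ r i := by
        gcongr
        exacts [hr i, hmax i (mem_filter.2 ⟨mem_univ i, hai⟩)]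

theorem prod_update_ceil_mul_le [DecidableEq ι] (hr : ∀ i, 0 ≤ r i) (hsum : ∑ i, r i = 1)
    {ε η T : ℝ} (hε : 0 < ε) (hε1 : ε ≤ 1) (hη : 0 < η)
    (hηε : 2 ^ Fintype.card ι * η ≤ ε ^ Fintype.card ι) (hT : 1 ≤ T) (j : ι) :
    (∏ i, (Function.update (fun i => ⌈T ^ r i / ε⌉₊) j 1 i : ℝ)) * (η * T ^ r j) ≤ ε * T := by
  have hT0 : 0 < T := one_pos.trans_le hT
  set g : ι → ℝ := fun i => 2 / ε * T ^ r i
  have hceil : ∀ i, (⌈T ^ r i / ε⌉₊ : ℝ) ≤ g i := fun i => by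
    refine (Nat.ceil_le_two_mul ?_).trans_eq (by ring)
    rw [le_div_iff₀ hε]
    nlinarith [Real.one_le_rpow hT (hr i)]
  calc (∏ i, (Function.update (fun i => ⌈T ^ r i / ε⌉₊) j 1 i : ℝ)) * (η * T ^ r j)
      = (∏ i ∈ univ \ {j}, (⌈T ^ r i / ε⌉₊ : ℝ)) * (η * T ^ r j) := by
        rw [← Nat.cast_prod, prod_update_of_mem (mem_univ j), one_mul, Nat.cast_prod]
    _ ≤ (∏ i ∈ univ \ {j}, g i) * (η * T ^ r j) := by
        gcongr with i
        exact hceil i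
    _ = η * ε / 2 * (g j * ∏ i ∈ univ \ {j}, g i) := by
        simp only [g]; field_simp
    _ = η * (2 / ε) ^ Fintype.card ι * (ε / 2 * T) := by
        rw [← prod_eq_mul_prod_sdiff_singleton_of_mem (mem_univ j) g, prod_mul_distrib,
          prod_const, prod_rpow_eq_self hsum hT0, card_univ]
        ring
    _ ≤ 1 * (ε * T) := by
        gcongr
        · rw [div_pow, mul_div_assoc', div_le_one (by positivity)]; linarith
        · linarith
    _ = ε * T := one_mul _

theorem abs_mul_add_le_of_sum_mul_eq [DecidableEq ι] {ε η T : ℝ} (hε : 0 < ε) (hη : 0 < η)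
    (hT : 0 < T) {q a0 : ℤ} {a p : ι → ℤ} (hap : ∑ i, a i * p i = q * a0)
    (hqT : |(q : ℝ)| ≤ ε * T) (hL : |a0 + ∑ i, (a i : ℝ) * x i| ≤ η / T)
    (haT : ∀ i, |(a i : ℝ)| ≤ η * T ^ r i) {j : ι} (haj : |(a j : ℝ)| = η * T ^ r j)
    (hp : ∀ i ≠ j, |(q : ℝ) * x i + p i| ≤ ε / T ^ r i) :
    |(q : ℝ) * x j + p j| ≤ (Fintype.card ι + 1) * ε / T ^ r j := by
  have hothers :
      ∑ i ∈ univ \ {j}, |(a i : ℝ) * (q * x i + p i)| ≤ Fintype.card ι * (η * ε) :=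
    calc ∑ i ∈ univ \ {j}, |(a i : ℝ) * (q * x i + p i)| ≤ ∑ _i ∈ univ \ {j}, η * ε :=
          sum_le_sum fun i hi => abs_mul_le_mul_of_le_mul_of_le_div (by positivity) (haT i)
            (hp i (by simpa using hi))
      _ ≤ ∑ _i : ι, η * ε :=
          sum_le_sum_of_subset_of_nonneg sdiff_subset fun _ _ _ => by positivity
      _ = Fintype.card ι * (η * ε) := by simp
  have hj := abs_le_abs_add_sum_sdiff_abs (cast_mul_add_sum_eq hap.symm x).symm j
  have hqL := abs_mul_le_mul_of_le_mul_of_le_div hT hqT hL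
  rw [abs_mul, haj] at hj
  rw [le_div_iff₀ (by positivity)]
  refine le_of_mul_le_mul_left ?_ hη
  linarith

theorem HasDualApprox.hasSimultaneousApprox (hr : ∀ i, 0 ≤ r i) (hsum : ∑ i, r i = 1)
    {ε η : ℝ} (hε : 0 < ε) (hε1 : ε ≤ 1) (hη : 0 < η) (hη1 : η < 1)
    (hηε : 2 ^ Fintype.card ι * η ≤ ε ^ Fintype.card ι) (h : HasDualApprox r x η) :
    HasSimultaneousApprox r x ((Fintype.card ι + 1) * ε) := by
  classical
  obtain ⟨N, hN, a0, a, ha, hL, hab⟩ := h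
  obtain ⟨T, hT1, hTN, j, haj, haT⟩ := exists_tight_scale hr hη hη1 (by linarith) ha hab
  have hT0 : 0 < T := one_pos.trans_le hT1
  have haj0 : a j ≠ 0 := by
    rintro h0
    rw [h0, Int.cast_zero, abs_zero] at haj
    exact (mul_pos hη (Real.rpow_pos_of_pos hT0 (r j))).ne haj
  have : NeZero (a j).natAbs := ⟨Int.natAbs_ne_zero.2 haj0⟩
  -- No grid in coordinate `j`: it is recovered from the congruence modulo `a j` instead,
  -- and this saving of `|a j| ≈ η T ^ r j` is what makes the count fit into `⌊ε * T⌋₊`.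
  set B : ι → ℕ := Function.update (fun i => ⌈T ^ r i / ε⌉₊) j 1
  have hB : ∀ i, 0 < B i := fun i => by
    rcases eq_or_ne i j with rfl | hij
    · simp [B]
    · simp only [B, Function.update_of_ne hij]; positivity
  have hcount : (∏ i, B i) * (a j).natAbs ≤ ⌊ε * T⌋₊ := by
    apply Nat.le_floor
    push_cast [Nat.cast_natAbs, Int.cast_abs]
    rw [haj]
    exact prod_update_ceil_mul_le hr hsum hε hε1 hη hηε hT1 j
  obtain ⟨q, hq, hqK, p, hp, hdvd⟩ := exists_abs_mul_add_lt_and_dvd x hB a0 a _ hcount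
  obtain ⟨k, hk⟩ := exists_update_sum_mul_eq (Int.natAbs_dvd.1 hdvd)
  have hqT : |(q : ℝ)| ≤ ε * T := by
    rw [← Int.cast_abs]
    exact (Int.cast_le.2 hqK).trans (by push_cast; exact Nat.floor_le (by positivity))
  have hp' : ∀ i ≠ j, |(q : ℝ) * x i + Function.update p j k i| ≤ ε / T ^ r i :=
    fun i hij => by
      rw [Function.update_of_ne hij]
      have hBi : T ^ r i / ε ≤ B i := by
        simpa only [B, Function.update_of_ne hij] using Nat.le_ceil _
      refine (hp i).le.trans ?_
      simpa only [one_div_div] using one_div_le_one_div_of_le (by positivity) hBi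
  have hε_le : ε ≤ (Fintype.card ι + 1) * ε := le_mul_of_one_le_left hε.le (by simp)
  refine ⟨T, hT1, q, Function.update p j k, hq, hqT.trans (by gcongr), fun i => ?_⟩
  rcases eq_or_ne i j with rfl | hij
  · exact abs_mul_add_le_of_sum_mul_eq hε hη hT0 hk hqT (hL.trans (by gcongr)) haT haj hp'
  · exact (hp' i hij).trans (by gcongr)

theorem forall_hasSimultaneousApprox_iff_forall_hasDualApprox (hr : ∀ i, 0 ≤ r i)
    (hsum : ∑ i, r i = 1) :
    (∀ ε > 0, HasSimultaneousApprox r x ε) ↔ ∀ η > 0, HasDualApprox r x η := by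
  set n := Fintype.card ι
  constructor
  · intro h η' hη'
    set η := min η' 1 / (n + 1)
    have hη : 0 < η := by positivity
    have hη1 : η ≤ 1 := div_le_one_of_le₀ ((min_le_right _ _).trans (by simp)) (by positivity)
    refine ((h (η ^ n / 2) (by positivity)).hasDualApprox hr hsum (by positivity) ?_ hη
      (mul_div_cancel₀ _ two_ne_zero).le).mono ?_
    · linarith [pow_le_one₀ hη.le hη1 (n := n)]
    · rw [mul_div_cancel₀ _ (by positivity)]; exact min_le_left _ _
  · intro h ε' hε'
    set ε := min ε' 1 / (n + 1)
    have hε : 0 < ε := by positivity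
    have hε1 : ε ≤ 1 := div_le_one_of_le₀ ((min_le_right _ _).trans (by simp)) (by positivity)
    have hηε : (2 : ℝ) ^ n * ((ε / 2) ^ n / 2) ≤ ε ^ n := by
      have : (2 : ℝ) ^ n * ((ε / 2) ^ n / 2) = ε ^ n / 2 := by rw [div_pow]; field_simp
      linarith [pow_pos hε n]
    refine ((h ((ε / 2) ^ n / 2) (by positivity)).hasSimultaneousApprox hr hsum hε hε1
      (by positivity) ?_ hηε).mono ?_
    · linarith [pow_le_one₀ (by positivity : 0 ≤ ε / 2) (by linarith) (n := n)]
    · rw [mul_div_cancel₀ _ (by positivity)]; exact min_le_left _ _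

end

theorem stmt_5_general (n : ℕ) (r : Fin n → ℝ)
    (hr : ∀ i, 0 ≤ r i) (hsum : ∑ i, r i = 1) (x : Fin n → ℝ) :
    (∃ c > (0 : ℝ), ∀ (p : Fin n → ℤ) (q : ℤ), q ≠ 0 →
        ∃ i, c ≤ |(q : ℝ)| ^ (r i) * |(q : ℝ) * x i + (p i : ℝ)|) ↔
    (∃ c' > (0 : ℝ), ∀ N : ℝ, 1 ≤ N → ∀ (a0 : ℤ) (a : Fin n → ℤ),
        (|(a0 : ℝ) + ∑ i, (a i : ℝ) * x i| < c' * N⁻¹ ∧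
          ∀ i, |(a i : ℝ)| < N ^ (r i)) →
        a0 = 0 ∧ a = 0) := by
  rw [← not_iff_not]
  exact (not_isBadSimultaneous_iff hr hsum).trans <|
    (forall_hasSimultaneousApprox_iff_forall_hasDualApprox hr hsum).trans
      (not_isBadDual_iff hr).symm

/-- Equivalence of the simultaneous and dual forms of being `r`-badly approximable
(Lemma 1 of Beresnevich, going back to Mahler). -/
theorem stmt_5 (n : ℕ) (hn : 1 ≤ n) (r : Fin n → ℝ)
    (hr : ∀ i, 0 ≤ r i) (hsum : ∑ i, r i = 1) (x : Fin n → ℝ) :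
    (∃ c > (0 : ℝ), ∀ (p : Fin n → ℤ) (q : ℤ), q ≠ 0 →
        ∃ i, c ≤ |(q : ℝ)| ^ (r i) * |(q : ℝ) * x i + (p i : ℝ)|) ↔
    (∃ c' > (0 : ℝ), ∀ N : ℝ, 1 ≤ N → ∀ (a0 : ℤ) (a : Fin n → ℤ),
        (|(a0 : ℝ) + ∑ i, (a i : ℝ) * x i| < c' * N⁻¹ ∧
          ∀ i, |(a i : ℝ)| < N ^ (r i)) →
        a0 = 0 ∧ a = 0) :=
  stmt_5_general n r hr hsum x
end

section
/- Let v_1,...,v_i be vectors in a normed space decomposed as v_j = a_+(j) w_+ + a_1(j) w_1 + w'(j) with w'(j) in a subspace W_2 complementary to span{w_+, w_1}. Suppose ‖w'(1)‖ ≤ ρ, and ‖∑_{j=1}^i ε_1(j) a_1(j) ⋀_{k≠j} w'(k)‖ ≤ δ where ε_1(j) are the signs arising from expanding v_1 ∧ ⋯ ∧ v_i, and |a_1(1)| > σ > 0. Then ‖⋀_{j=1}^i w'(j)‖ ≤ ρ·δ/σ. -/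
/-!
Since `w 0` squares to zero, left multiplication by `w 0` kills every term of
`∑ⱼ (-1)^j a₁(j) ⋀_{k ≠ j} w(k)` except the one omitting `w 0`, which it turns into
`a₁(0) ⋀ⱼ w(j)`. Submultiplicativity of the norm then gives `|a₁(0)| ‖⋀ⱼ w(j)‖ ≤ ρ δ`.
-/

namespace List

theorem mul_prod_map_filter_finRange_ne_zero {M : Type*} [Monoid M] {n : ℕ}
    (w : Fin (n + 1) → M) :
    w 0 * (((finRange (n + 1)).filter (· != 0)).map w).prod =
      ((finRange (n + 1)).map w).prod := by
  rw [finRange_succ, filter_cons_of_neg (by simp), filter_eq_self.mpr (by simp)]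
  simp

theorem mul_prod_map_filter_finRange_ne_succ {M₀ : Type*} [MonoidWithZero M₀] {n : ℕ}
    {w : Fin (n + 1) → M₀} (hw : w 0 * w 0 = 0) (j : Fin n) :
    w 0 * (((finRange (n + 1)).filter (· != j.succ)).map w).prod = 0 := by
  rw [finRange_succ, filter_cons_of_pos (by simpa using (Fin.succ_ne_zero j).symm), map_cons,
    prod_cons, ← mul_assoc, hw, zero_mul]

end List

theorem mul_sum_smul_prod_omit {R A : Type*} [CommSemiring R] [Semiring A] [Algebra R A] {n : ℕ}
    {w : Fin (n + 1) → A} (hw : w 0 * w 0 = 0) (c : Fin (n + 1) → R) :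
    w 0 * ∑ j, c j • (((List.finRange (n + 1)).filter (· != j)).map w).prod =
      c 0 • ((List.finRange (n + 1)).map w).prod := by
  simp only [Fin.sum_univ_succ, mul_add, Finset.mul_sum, mul_smul_comm,
    List.mul_prod_map_filter_finRange_ne_succ hw, smul_zero, Finset.sum_const_zero, add_zero,
    List.mul_prod_map_filter_finRange_ne_zero]

theorem stmt_16_general (A : Type*) [NormedRing A] [NormedAlgebra ℝ A]
    (i : ℕ) (hi : 1 ≤ i) (w : Fin i → A)
    (hsq : ∀ k, w k * w k = 0)
    (a1 : Fin i → ℝ) (ρ δ σ : ℝ) (hσ : 0 < σ)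
    (hw1 : ‖w ⟨0, hi⟩‖ ≤ ρ)
    (hsum : ‖∑ j : Fin i, ((-1 : ℝ) ^ (j : ℕ) * a1 j) •
        (((List.finRange i).filter (fun k => k != j)).map w).prod‖ ≤ δ)
    (ha : σ < |a1 ⟨0, hi⟩|) :
    ‖((List.finRange i).map w).prod‖ ≤ ρ * δ / σ := by
  obtain ⟨n, rfl⟩ := Nat.exists_eq_add_of_le' hi
  change ‖w 0‖ ≤ ρ at hw1
  change σ < |a1 0| at ha
  set S := ∑ j : Fin (n + 1), ((-1 : ℝ) ^ (j : ℕ) * a1 j) •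
    (((List.finRange (n + 1)).filter (fun k => k != j)).map w).prod
  set P := ((List.finRange (n + 1)).map w).prod
  have hkey : w 0 * S = a1 0 • P := by
    simpa using mul_sum_smul_prod_omit (hsq 0) (fun j => (-1 : ℝ) ^ (j : ℕ) * a1 j)
  have hbound : |a1 0| * ‖P‖ ≤ ρ * δ := calc
    |a1 0| * ‖P‖ = ‖w 0 * S‖ := by rw [hkey, norm_smul, Real.norm_eq_abs]
    _ ≤ ‖w 0‖ * ‖S‖ := norm_mul_le _ _
    _ ≤ ρ * δ := mul_le_mul hw1 hsum (norm_nonneg _) ((norm_nonneg _).trans hw1)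
  rw [le_div_iff₀ hσ, mul_comm]
  exact (mul_le_mul_of_nonneg_right ha.le (norm_nonneg P)).trans hbound

/-- The key algebraic step of the key lemma: in a normed algebra, if the "wedge factors"
`w j` pairwise anticommute and square to zero, the first factor has norm at most `ρ`,
the `w₁`-coefficient combination `∑ j (-1)^j a₁(j) ⋀_{k ≠ j} w(k)` has norm at most `δ`,
and `|a₁(0)| > σ > 0`, then `‖⋀_j w(j)‖ ≤ ρ δ / σ`. Products are ordered products of
lists, standing in for wedge products. -/
theorem stmt_16 (A : Type*) [NormedRing A] [NormedAlgebra ℝ A]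
    (i : ℕ) (hi : 1 ≤ i) (w : Fin i → A)
    (hanti : ∀ k l, w k * w l = -(w l * w k))
    (hsq : ∀ k, w k * w k = 0)
    (a1 : Fin i → ℝ) (ρ δ σ : ℝ) (hρ : 0 < ρ) (hδ : 0 ≤ δ) (hσ : 0 < σ)
    (hw1 : ‖w ⟨0, hi⟩‖ ≤ ρ)
    (hsum : ‖∑ j : Fin i, ((-1 : ℝ) ^ (j : ℕ) * a1 j) •
        (((List.finRange i).filter (fun k => k != j)).map w).prod‖ ≤ δ)
    (ha : σ < |a1 ⟨0, hi⟩|) :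
    ‖((List.finRange i).map w).prod‖ ≤ ρ * δ / σ :=
  stmt_16_general A i hi w hsq a1 ρ δ σ hσ hw1 hsum ha
end
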